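/- In the symmetric quadratic-equation setup, let Q̄ ∈ ℝ^{d×r} be any matrix of the form V_⊥Q with ‖Q̄‖_max ≤ ω/√d, suppose rω < 1/2, and set V̄ = (V + Q̄)(I_r + Q̄ᵀQ̄)^{−1/2}. Then the distance between the column spaces satisfies d(V̄, V) := ‖V̄V̄ᵀ − VVᵀ‖_2 ≤ 4·r^{3/2}·√μ·ω, and moreover ‖V̄‖_max ≤ 2·√(rμ/d). -/

import Mathlib

open Matrix BigOperators

/-- Entrywise max norm: largest absolute value of an entry. -/
noncomputable def matMaxNorm {m n : Type*} [Fintype m] [Fintype n] (M : Matrix m n ℝ) : ℝ :=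
  ⨆ i, ⨆ j, |M i j|

/-- Matrix ∞-norm: maximum absolute row sum. -/
noncomputable def matInfNorm {m n : Type*} [Fintype m] [Fintype n] (M : Matrix m n ℝ) : ℝ :=
  ⨆ i, ∑ j, |M i j|

/-- Matrix 1-norm: maximum absolute column sum. -/
noncomputable def matOneNorm {m n : Type*} [Fintype m] [Fintype n] (M : Matrix m n ℝ) : ℝ :=
  ⨆ j, ∑ i, |M i j|

/-- Euclidean norm of a vector. -/
noncomputable def vec2Norm {n : Type*} [Fintype n] (x : n → ℝ) : ℝ :=
  Real.sqrt (∑ i, (x i) ^ 2)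

/-- ℓ∞ norm of a vector. -/
noncomputable def vecSupNorm {n : Type*} [Fintype n] (x : n → ℝ) : ℝ :=
  ⨆ i, |x i|

/-- Spectral norm (operator 2-norm) of a matrix. -/
noncomputable def matSpecNorm {m n : Type*} [Fintype m] [Fintype n] (M : Matrix m n ℝ) : ℝ :=
  sSup {c : ℝ | ∃ x : n → ℝ, vec2Norm x ≤ 1 ∧ c = vec2Norm (M.mulVec x)}

/-- Coherence of a d × r matrix with orthonormal columns. -/
noncomputable def matCoherence {d r : ℕ} (V : Matrix (Fin d) (Fin r) ℝ) : ℝ :=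
  ((d : ℝ) / (r : ℝ)) * ⨆ i, ∑ j, (V i j) ^ 2

/-- Inverse of the positive semidefinite square root of a matrix (junk value otherwise). -/
noncomputable def matInvSqrt {n : Type*} [Fintype n] [DecidableEq n] (S : Matrix n n ℝ) :
    Matrix n n ℝ :=
  letI := Classical.propDecidable
  if h : S.PosSemidef then
    ((h.1.eigenvectorUnitary : Matrix n n ℝ) * diagonal ((↑) ∘ (√·) ∘ h.1.eigenvalues) *
      (star h.1.eigenvectorUnitary : Matrix n n ℝ))⁻¹ else 0

/-- Weighted max-norm for matrices with d₁ + d₂ rows. -/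
noncomputable def wMaxNorm {d₁ d₂ : ℕ} {n : Type*} [Fintype n]
    (M : Matrix (Fin d₁ ⊕ Fin d₂) n ℝ) : ℝ :=
  matMaxNorm (Matrix.of fun i j =>
    (Sum.elim (fun _ : Fin d₁ => Real.sqrt d₁) (fun _ : Fin d₂ => Real.sqrt d₂) i) * M i j)

/-- Huber loss with parameter α. -/
noncomputable def huberLoss (α x : ℝ) : ℝ := if |x| ≤ α then x ^ 2 else 2 * α * |x| - α ^ 2

/-!
Put `W = V + Q̄` and `R = (I + Q̄ᵀQ̄)^{-1/2}`. Because `VᵀQ̄ = 0` we have `WᵀW = I + Q̄ᵀQ̄`, so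
`V̄ = WR` has orthonormal columns. The spectrum of `I + Q̄ᵀQ̄` lies in `[1, 1 + ‖Q̄‖₂²]`, so the
functional calculus gives `‖R‖₂ ≤ 1` and `‖I - R‖₂ ≤ ‖Q̄‖₂²`, and the entry bound on `Q̄` gives
`‖Q̄‖₂ ≤ √r ω`. The identities `V̄ - V = Q̄R - V(I - R)` and
`V̄V̄ᵀ - VVᵀ = V̄(V̄ - V)ᵀ + (V̄ - V)Vᵀ` then bound the distance by `2(√r ω + r ω²)`. Entrywise,
`V̄ = W - W(I - R)`, where `|V_ij| ≤ √(rμ/d)` by the definition of coherence and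
`|Q̄_ij| ≤ ω/√d ≤ √(rμ/d)/2` because `μ ≥ 1`.
-/

open scoped Matrix.Norms.L2Operator

theorem abs_le_matMaxNorm {m n : Type*} [Fintype m] [Fintype n] (M : Matrix m n ℝ) (i : m)
    (j : n) : |M i j| ≤ matMaxNorm M :=
  (le_ciSup (Set.finite_range _).bddAbove j).trans
    (le_ciSup (f := fun i => ⨆ j, |M i j|) (Set.finite_range _).bddAbove i)

theorem matMaxNorm_le {m n : Type*} [Fintype m] [Fintype n] {M : Matrix m n ℝ} {c : ℝ}
    (hc : 0 ≤ c) (h : ∀ i j, |M i j| ≤ c) : matMaxNorm M ≤ c :=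
  Real.iSup_le (fun i => Real.iSup_le (h i) hc) hc

section Coherence
variable {d r : ℕ} (V : Matrix (Fin d) (Fin r) ℝ)

theorem sum_sq_le_iSup_sum_sq (i : Fin d) : ∑ j, V i j ^ 2 ≤ ⨆ i, ∑ j, V i j ^ 2 :=
  le_ciSup (f := fun i => ∑ j, V i j ^ 2) (Set.finite_range _).bddAbove i

theorem sq_le_mul_matCoherence_div (i : Fin d) (j : Fin r) :
    V i j ^ 2 ≤ r * matCoherence V / d := by
  have hd : (d : ℝ) ≠ 0 := by have := i.pos; positivity
  have hr : (r : ℝ) ≠ 0 := by have := j.pos; positivity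
  rw [matCoherence]
  field_simp
  exact (Finset.single_le_sum (fun k _ => sq_nonneg (V i k)) (Finset.mem_univ j)).trans
    (sum_sq_le_iSup_sum_sq V i)

theorem one_le_matCoherence (hV : Vᵀ * V = 1) (hr : 0 < r) : 1 ≤ matCoherence V := by
  have hcol (j : Fin r) : ∑ i, V i j ^ 2 = 1 := by
    simpa [mul_apply, sq] using congrFun (congrFun hV j) j
  have htotal : (r : ℝ) ≤ d * ⨆ i, ∑ j, V i j ^ 2 := calc
    (r : ℝ) = ∑ i, ∑ j, V i j ^ 2 := by rw [Finset.sum_comm]; simp [hcol]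
    _ ≤ ∑ _i : Fin d, ⨆ i, ∑ j, V i j ^ 2 := Finset.sum_le_sum fun i _ => sum_sq_le_iSup_sum_sq V i
    _ = d * ⨆ i, ∑ j, V i j ^ 2 := by simp
  rw [matCoherence, div_mul_eq_mul_div, le_div_iff₀ (Nat.cast_pos.2 hr)]
  linarith

end Coherence

theorem transpose_mul_of_orthonormal {ι κ ν m : Type*} [Fintype m] [DecidableEq ι]
    {v : ι → m → ℝ} (hon : ∀ i j, ∑ k, v i k * v j k = if i = j then (1 : ℝ) else 0)
    (e : κ → ι) (e' : ν → ι) :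
    (Matrix.of fun a k => v (e k) a)ᵀ * Matrix.of (fun a l => v (e' l) a) =
      Matrix.of fun k l => if e k = e' l then 1 else 0 := by
  ext k l
  simp [Matrix.mul_apply, hon]

theorem transpose_mul_self_of_orthonormal {ι κ m : Type*} [Fintype m] [DecidableEq ι]
    [DecidableEq κ] {v : ι → m → ℝ}
    (hon : ∀ i j, ∑ k, v i k * v j k = if i = j then (1 : ℝ) else 0) {e : κ → ι}
    (he : Function.Injective e) :
    (Matrix.of fun a k => v (e k) a)ᵀ * Matrix.of (fun a k => v (e k) a) = 1 := by
  rw [transpose_mul_of_orthonormal hon]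
  ext k l
  simp [Matrix.one_apply, he.eq_iff]

theorem transpose_mul_eq_zero_of_orthonormal {ι κ ν m : Type*} [Fintype m] [DecidableEq ι]
    {v : ι → m → ℝ} (hon : ∀ i j, ∑ k, v i k * v j k = if i = j then (1 : ℝ) else 0)
    {e : κ → ι} {e' : ν → ι} (hee' : ∀ k l, e k ≠ e' l) :
    (Matrix.of fun a k => v (e k) a)ᵀ * Matrix.of (fun a l => v (e' l) a) = 0 := by
  rw [transpose_mul_of_orthonormal hon]
  ext k l
  simp [hee' k l]

section Euclidean
variable {l m n : Type*} [Fintype n]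

theorem vec2Norm_eq_norm_toLp (x : n → ℝ) : vec2Norm x = ‖WithLp.toLp 2 x‖ := by
  simp [vec2Norm, EuclideanSpace.norm_eq]

theorem norm_toLp_le_of_forall_abs_le {x : n → ℝ} {c : ℝ} (hc : 0 ≤ c) (h : ∀ i, |x i| ≤ c) :
    ‖WithLp.toLp 2 x‖ ≤ √(Fintype.card n) * c := by
  rw [← vec2Norm_eq_norm_toLp, vec2Norm, ← Real.sqrt_sq hc, ← Real.sqrt_mul (Nat.cast_nonneg _)]
  refine Real.sqrt_le_sqrt ?_
  calc ∑ i, x i ^ 2 ≤ ∑ _i : n, c ^ 2 :=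
        Finset.sum_le_sum fun i _ => sq_abs (x i) ▸ pow_le_pow_left₀ (abs_nonneg _) (h i) 2
    _ = Fintype.card n * c ^ 2 := by simp

theorem abs_dotProduct_le_norm_mul_norm (x y : n → ℝ) :
    |x ⬝ᵥ y| ≤ ‖WithLp.toLp 2 x‖ * ‖WithLp.toLp 2 y‖ := by
  simpa [EuclideanSpace.inner_eq_star_dotProduct, dotProduct_comm] using
    abs_real_inner_le_norm (WithLp.toLp 2 x : EuclideanSpace ℝ n) (WithLp.toLp 2 y)

namespace Matrix

theorem matSpecNorm_le_l2_opNorm [Fintype m] [DecidableEq n] (M : Matrix m n ℝ) :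
    matSpecNorm M ≤ ‖M‖ := by
  refine Real.sSup_le ?_ (norm_nonneg M)
  rintro _ ⟨x, hx, rfl⟩
  rw [vec2Norm_eq_norm_toLp] at hx ⊢
  calc ‖WithLp.toLp 2 (M *ᵥ x)‖ ≤ ‖M‖ * ‖WithLp.toLp 2 x‖ := l2_opNorm_mulVec M (WithLp.toLp 2 x)
    _ ≤ ‖M‖ := mul_le_of_le_one_right (norm_nonneg M) hx

theorem norm_toLp_col_le [Fintype m] [DecidableEq n] (B : Matrix m n ℝ) (j : n) :
    ‖WithLp.toLp 2 (B.col j)‖ ≤ ‖B‖ := by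
  have := l2_opNorm_mulVec B (EuclideanSpace.single j 1)
  simp only [PiLp.ofLp_single, mulVec_single, MulOpposite.op_one, one_smul,
    PiLp.continuousLinearEquiv_symm_apply, PiLp.norm_single, norm_one, mul_one] at this
  exact this

theorem l2_opNorm_le_of_forall_abs_le [Fintype m] [DecidableEq n] {A : Matrix m n ℝ} {c : ℝ}
    (hc : 0 ≤ c) (h : ∀ i j, |A i j| ≤ c) :
    ‖A‖ ≤ √(Fintype.card m) * √(Fintype.card n) * c := by
  rw [l2_opNorm_def]
  refine ContinuousLinearMap.opNorm_le_bound _ (by positivity) fun x => ?_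
  have hrow (i : m) : |(A *ᵥ x) i| ≤ √(Fintype.card n) * c * ‖x‖ :=
    (abs_dotProduct_le_norm_mul_norm (A i) x).trans
      (mul_le_mul_of_nonneg_right (norm_toLp_le_of_forall_abs_le hc (h i)) (norm_nonneg x))
  exact (norm_toLp_le_of_forall_abs_le (by positivity) hrow).trans_eq (by ring)

theorem abs_mul_apply_le [Fintype l] [DecidableEq l] {A : Matrix m n ℝ} {i : m} {c : ℝ}
    (hc : 0 ≤ c) (h : ∀ k, |A i k| ≤ c) (B : Matrix n l ℝ) (j : l) :
    |(A * B) i j| ≤ √(Fintype.card n) * c * ‖B‖ :=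
  (abs_dotProduct_le_norm_mul_norm (A i) (B.col j)).trans
    (mul_le_mul (norm_toLp_le_of_forall_abs_le hc h) (norm_toLp_col_le B j) (norm_nonneg _)
      (by positivity))

theorem l2_opNorm_le_one_of_transpose_mul_self_eq_one [Fintype m] [DecidableEq n] {A : Matrix m n ℝ}
    (h : Aᵀ * A = 1) : ‖A‖ ≤ 1 := by
  have hA := l2_opNorm_conjTranspose_mul_self A
  rw [conjTranspose_eq_transpose_of_trivial, h, ← diagonal_one, l2_opNorm_diagonal] at hA
  have : ‖A‖ * ‖A‖ ≤ 1 := hA ▸ (pi_norm_le_iff_of_nonneg zero_le_one).2 fun _ => norm_one.le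
  nlinarith [norm_nonneg A]

end Matrix
end Euclidean

namespace Matrix

section SpectralCalculus
variable {n : Type*} [Fintype n] [DecidableEq n] {A S : Matrix n n ℝ}

theorem IsHermitian.l2_opNorm_cfc (hA : A.IsHermitian) (f : ℝ → ℝ) :
    ‖cfc f A‖ = ‖f ∘ hA.eigenvalues‖ := by
  rw [hA.cfc_eq, IsHermitian.cfc, Unitary.conjStarAlgAut_apply, ← Unitary.coe_star,
    CStarRing.norm_mul_coe_unitary, CStarRing.norm_coe_unitary_mul, l2_opNorm_diagonal]
  rfl

theorem IsHermitian.l2_opNorm_cfc_le (hA : A.IsHermitian) {f : ℝ → ℝ} {c : ℝ} (hc : 0 ≤ c)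
    (h : ∀ x ∈ spectrum ℝ A, |f x| ≤ c) : ‖cfc f A‖ ≤ c := by
  rw [hA.l2_opNorm_cfc, pi_norm_le_iff_of_nonneg hc]
  exact fun i => h _ (hA.eigenvalues_mem_spectrum_real i)

theorem IsHermitian.abs_le_l2_opNorm_cfc (hA : A.IsHermitian) (f : ℝ → ℝ) {x : ℝ}
    (hx : x ∈ spectrum ℝ A) : |f x| ≤ ‖cfc f A‖ := by
  obtain ⟨i, rfl⟩ := hA.spectrum_real_eq_range_eigenvalues ▸ hx
  rw [hA.l2_opNorm_cfc]
  exact norm_le_pi_norm (f ∘ hA.eigenvalues) i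

theorem PosSemidef.one_le_of_mem_spectrum_one_add (hA : A.PosSemidef) {x : ℝ}
    (hx : x ∈ spectrum ℝ (1 + A)) : 1 ≤ x := by
  rw [← map_one (algebraMap ℝ (Matrix n n ℝ)), ← spectrum.singleton_add_eq] at hx
  obtain ⟨_, rfl, y, hy, rfl⟩ := hx
  obtain ⟨i, rfl⟩ := hA.1.spectrum_real_eq_range_eigenvalues ▸ hy
  simpa using hA.eigenvalues_nonneg i

theorem PosDef.pos_of_mem_spectrum (hS : S.PosDef) {x : ℝ} (hx : x ∈ spectrum ℝ S) : 0 < x := by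
  obtain ⟨i, rfl⟩ := hS.1.spectrum_real_eq_range_eigenvalues ▸ hx
  exact hS.eigenvalues_pos i

theorem PosDef.matInvSqrt_eq_cfc (hS : S.PosDef) : matInvSqrt S = cfc (fun x => (√x)⁻¹) S := by
  -- the eigendecomposition inside `matInvSqrt` is taken with the classical `DecidableEq n`
  have hdec : (fun a b => Classical.propDecidable (a = b) : DecidableEq n) = ‹DecidableEq n› :=
    Subsingleton.elim _ _
  rw [cfc_inv _ _ (fun x hx => (Real.sqrt_pos.2 (hS.pos_of_mem_spectrum hx)).ne')
    (ha := hS.1.isSelfAdjoint), ← nonsing_inv_eq_ringInverse, hS.1.cfc_eq]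
  simp only [matInvSqrt]
  rw [dif_pos hS.posSemidef, hdec]
  rfl

theorem PosDef.transpose_matInvSqrt (hS : S.PosDef) : (matInvSqrt S)ᵀ = matInvSqrt S := by
  rw [hS.matInvSqrt_eq_cfc, ← conjTranspose_eq_transpose_of_trivial]
  exact cfc_predicate (p := IsSelfAdjoint) _ S

theorem PosDef.matInvSqrt_mul_self_mul_matInvSqrt (hS : S.PosDef) :
    matInvSqrt S * S * matInvSqrt S = 1 := by
  have hcont (f : ℝ → ℝ) : ContinuousOn f (spectrum ℝ S) := S.finite_spectrum.continuousOn f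
  have hS' : IsSelfAdjoint S := hS.1.isSelfAdjoint
  rw [hS.matInvSqrt_eq_cfc]
  nth_rw 2 [← cfc_id' ℝ S]
  rw [← cfc_mul _ _ S (hcont _) (hcont _), ← cfc_mul _ _ S (hcont _) (hcont _), ← cfc_one ℝ S]
  refine cfc_congr fun x hx => ?_
  have hx0 := hS.pos_of_mem_spectrum hx
  have := (Real.sqrt_pos.2 hx0).ne'
  field_simp
  simp [Real.sq_sqrt hx0.le]

theorem PosDef.l2_opNorm_matInvSqrt_le_one (hS : S.PosDef) (h1 : ∀ x ∈ spectrum ℝ S, 1 ≤ x) :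
    ‖matInvSqrt S‖ ≤ 1 := by
  rw [hS.matInvSqrt_eq_cfc]
  refine hS.1.l2_opNorm_cfc_le zero_le_one fun x hx => ?_
  rw [abs_inv, abs_of_nonneg (Real.sqrt_nonneg x)]
  exact inv_le_one_of_one_le₀ (Real.one_le_sqrt.2 (h1 x hx))

theorem PosDef.l2_opNorm_one_sub_matInvSqrt_le (hS : S.PosDef) (h1 : ∀ x ∈ spectrum ℝ S, 1 ≤ x) :
    ‖1 - matInvSqrt S‖ ≤ ‖S - 1‖ := by
  have hcont (f : ℝ → ℝ) : ContinuousOn f (spectrum ℝ S) := S.finite_spectrum.continuousOn f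
  have hS' : IsSelfAdjoint S := hS.1.isSelfAdjoint
  have hsub : S - 1 = cfc (fun x : ℝ => x - 1) S := by
    rw [cfc_sub _ _ S (hcont _) (hcont _), cfc_id' ℝ S, cfc_const_one ℝ S]
  rw [hsub, hS.matInvSqrt_eq_cfc, ← cfc_const_one ℝ S, ← cfc_sub _ _ S (hcont _) (hcont _)]
  refine hS.1.l2_opNorm_cfc_le (norm_nonneg _) fun x hx => ?_
  refine le_trans ?_ (hS.1.abs_le_l2_opNorm_cfc _ hx)
  have hx1 := h1 x hx
  have hsqrt : 1 ≤ √x := Real.one_le_sqrt.2 hx1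
  have hsq : √x ^ 2 = x := Real.sq_sqrt (by linarith)
  have hinv : (√x)⁻¹ * √x = 1 := inv_mul_cancel₀ (by positivity)
  rw [abs_of_nonneg (by linarith [inv_le_one_of_one_le₀ hsqrt]), abs_of_nonneg (by nlinarith)]
  nlinarith [inv_pos.2 (show 0 < √x by positivity)]

end SpectralCalculus

section Perturbation
variable {m n : Type*} [Fintype m] [Fintype n] [DecidableEq n] {V Q : Matrix m n ℝ}

/-- When `Vᵀ V = 1` and `Vᵀ Q = 0`, this is `(V + Q) ((V + Q)ᵀ (V + Q))^{-1/2}`, the orthonormal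
polar factor of `V + Q`. -/
noncomputable def perturbedBasis (V Q : Matrix m n ℝ) : Matrix m n ℝ :=
  (V + Q) * matInvSqrt (1 + Qᵀ * Q)

theorem posDef_one_add_transpose_mul_self (Q : Matrix m n ℝ) : (1 + Qᵀ * Q).PosDef := by
  simpa [conjTranspose_eq_transpose_of_trivial] using
    PosDef.one.add_posSemidef (posSemidef_conjTranspose_mul_self Q)

theorem one_le_of_mem_spectrum_one_add_transpose_mul_self {x : ℝ}
    (hx : x ∈ spectrum ℝ (1 + Qᵀ * Q)) : 1 ≤ x := by
  refine PosSemidef.one_le_of_mem_spectrum_one_add ?_ hx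
  simpa [conjTranspose_eq_transpose_of_trivial] using posSemidef_conjTranspose_mul_self Q

theorem l2_opNorm_matInvSqrt_one_add_le_one (Q : Matrix m n ℝ) :
    ‖matInvSqrt (1 + Qᵀ * Q)‖ ≤ 1 :=
  (posDef_one_add_transpose_mul_self Q).l2_opNorm_matInvSqrt_le_one
    fun _ => one_le_of_mem_spectrum_one_add_transpose_mul_self

theorem l2_opNorm_one_sub_matInvSqrt_one_add_le (Q : Matrix m n ℝ) :
    ‖1 - matInvSqrt (1 + Qᵀ * Q)‖ ≤ ‖Q‖ ^ 2 := by
  have h := (posDef_one_add_transpose_mul_self Q).l2_opNorm_one_sub_matInvSqrt_le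
    fun _ => one_le_of_mem_spectrum_one_add_transpose_mul_self
  rwa [add_sub_cancel_left, ← conjTranspose_eq_transpose_of_trivial,
    l2_opNorm_conjTranspose_mul_self, ← sq] at h

theorem transpose_perturbedBasis_mul_self (hV : Vᵀ * V = 1) (hVQ : Vᵀ * Q = 0) :
    (perturbedBasis V Q)ᵀ * perturbedBasis V Q = 1 := by
  have hS := posDef_one_add_transpose_mul_self Q
  have hQV : Qᵀ * V = 0 := by rw [← transpose_transpose V, ← transpose_mul, hVQ, transpose_zero]
  have hgram : (V + Q)ᵀ * (V + Q) = 1 + Qᵀ * Q := by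
    rw [transpose_add, Matrix.add_mul, Matrix.mul_add, Matrix.mul_add, hV, hVQ, hQV, add_zero,
      zero_add]
  rw [perturbedBasis, transpose_mul, hS.transpose_matInvSqrt, Matrix.mul_assoc,
    ← Matrix.mul_assoc (V + Q)ᵀ, hgram, ← Matrix.mul_assoc, hS.matInvSqrt_mul_self_mul_matInvSqrt]

theorem l2_opNorm_perturbedBasis_sub_le (hV : Vᵀ * V = 1) :
    ‖perturbedBasis V Q - V‖ ≤ ‖Q‖ + ‖Q‖ ^ 2 := by
  have hsplit : perturbedBasis V Q - V =
      Q * matInvSqrt (1 + Qᵀ * Q) - V * (1 - matInvSqrt (1 + Qᵀ * Q)) := by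
    rw [perturbedBasis, Matrix.add_mul, Matrix.mul_sub, Matrix.mul_one]; abel
  rw [hsplit]
  calc _ ≤ ‖Q‖ * ‖matInvSqrt (1 + Qᵀ * Q)‖ + ‖V‖ * ‖1 - matInvSqrt (1 + Qᵀ * Q)‖ :=
        (norm_sub_le _ _).trans (add_le_add (l2_opNorm_mul _ _) (l2_opNorm_mul _ _))
    _ ≤ ‖Q‖ * 1 + 1 * ‖Q‖ ^ 2 := by
        gcongr
        · exact l2_opNorm_matInvSqrt_one_add_le_one Q
        · exact l2_opNorm_le_one_of_transpose_mul_self_eq_one hV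
        · exact l2_opNorm_one_sub_matInvSqrt_one_add_le Q
    _ = ‖Q‖ + ‖Q‖ ^ 2 := by ring

theorem l2_opNorm_perturbedBasis_mul_transpose_sub_le [DecidableEq m] (hV : Vᵀ * V = 1)
    (hVQ : Vᵀ * Q = 0) :
    ‖perturbedBasis V Q * (perturbedBasis V Q)ᵀ - V * Vᵀ‖ ≤ 2 * (‖Q‖ + ‖Q‖ ^ 2) := by
  set W := perturbedBasis V Q
  have hsplit : W * Wᵀ - V * Vᵀ = W * (W - V)ᵀ + (W - V) * Vᵀ := by
    rw [transpose_sub, Matrix.mul_sub, Matrix.sub_mul]; abel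
  have hVt : ‖Vᵀ‖ ≤ 1 := by
    rw [← conjTranspose_eq_transpose_of_trivial, l2_opNorm_conjTranspose]
    exact l2_opNorm_le_one_of_transpose_mul_self_eq_one hV
  have hdiff := l2_opNorm_perturbedBasis_sub_le (Q := Q) hV
  rw [hsplit]
  calc _ ≤ ‖W‖ * ‖(W - V)ᵀ‖ + ‖W - V‖ * ‖Vᵀ‖ :=
        (norm_add_le _ _).trans (add_le_add (l2_opNorm_mul _ _) (l2_opNorm_mul _ _))
    _ ≤ 1 * (‖Q‖ + ‖Q‖ ^ 2) + (‖Q‖ + ‖Q‖ ^ 2) * 1 := by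
        rw [← conjTranspose_eq_transpose_of_trivial, l2_opNorm_conjTranspose]
        gcongr
        exact l2_opNorm_le_one_of_transpose_mul_self_eq_one (transpose_perturbedBasis_mul_self hV hVQ)
    _ = 2 * (‖Q‖ + ‖Q‖ ^ 2) := by ring

theorem abs_perturbedBasis_apply_le {i : m} {c : ℝ} (hc : 0 ≤ c) (h : ∀ k, |(V + Q) i k| ≤ c)
    (j : n) : |perturbedBasis V Q i j| ≤ c * (1 + √(Fintype.card n) * ‖Q‖ ^ 2) := by
  have hsplit : perturbedBasis V Q = (V + Q) - (V + Q) * (1 - matInvSqrt (1 + Qᵀ * Q)) := by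
    rw [perturbedBasis, Matrix.mul_sub, Matrix.mul_one, sub_sub_cancel]
  rw [hsplit, sub_apply]
  calc _ ≤ c + √(Fintype.card n) * c * ‖1 - matInvSqrt (1 + Qᵀ * Q)‖ :=
        (abs_sub _ _).trans (add_le_add (h j) (abs_mul_apply_le hc h _ j))
    _ ≤ c + √(Fintype.card n) * c * ‖Q‖ ^ 2 := by
        gcongr; exact l2_opNorm_one_sub_matInvSqrt_one_add_le Q
    _ = c * (1 + √(Fintype.card n) * ‖Q‖ ^ 2) := by ring

theorem matMaxNorm_perturbedBasis_le {s : ℝ} (hs : 0 ≤ s) (hV : ∀ i j, |V i j| ≤ s)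
    (hQ : ∀ i j, |Q i j| ≤ s / 2) (hQn : √(Fintype.card n) * ‖Q‖ ^ 2 ≤ 1 / 4) :
    matMaxNorm (perturbedBasis V Q) ≤ 2 * s := by
  refine matMaxNorm_le (by positivity) fun i j => ?_
  have hrow (k : n) : |(V + Q) i k| ≤ 3 / 2 * s :=
    (abs_add_le _ _).trans (by linarith [hV i k, hQ i k])
  refine (abs_perturbedBasis_apply_le (by positivity) hrow j).trans ?_
  nlinarith [mul_nonneg (Real.sqrt_nonneg (Fintype.card n)) (sq_nonneg ‖Q‖)]

end Perturbation
end Matrix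

theorem two_mul_add_sq_le {r μ ω q : ℝ} (hr : 1 ≤ r) (hμ : 1 ≤ μ) (hω : 0 ≤ ω)
    (hsmall : r * ω < 1 / 2) (hq0 : 0 ≤ q) (hq : q ≤ √r * ω) :
    2 * (q + q ^ 2) ≤ 4 * r ^ ((3 : ℝ) / 2) * √μ * ω := by
  have hsqrt : 1 ≤ √r := Real.one_le_sqrt.2 hr
  have hsq : √r ^ 2 = r := Real.sq_sqrt (by linarith)
  have hq2 : q ^ 2 ≤ √r * ω / 2 := calc
    q ^ 2 ≤ (√r * ω) ^ 2 := pow_le_pow_left₀ hq0 hq 2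
    _ = r * ω * ω := by rw [mul_pow, hsq]; ring
    _ ≤ ω / 2 := by nlinarith
    _ ≤ √r * ω / 2 := by nlinarith
  have hr32 : r ^ ((3 : ℝ) / 2) = r * √r := by
    rw [show (3 : ℝ) / 2 = 1 + 1 / 2 by norm_num, Real.rpow_add (by linarith), Real.rpow_one,
      Real.sqrt_eq_rpow]
  have hμ' : 1 ≤ √μ := Real.one_le_sqrt.2 hμ
  rw [hr32]
  have : 0 ≤ √r * ω := by positivity
  nlinarith [mul_le_mul hr hμ' zero_le_one (by linarith)]

theorem div_sqrt_le_sqrt_mul_div_div_two {r μ ω d : ℝ} (hr : 1 ≤ r) (hμ : 1 ≤ μ) (hω : 0 ≤ ω)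
    (hsmall : r * ω < 1 / 2) (hd : 0 ≤ d) : ω / √d ≤ √(r * μ / d) / 2 := by
  have hrμ : 1 ≤ √(r * μ) := Real.one_le_sqrt.2 (one_le_mul_of_one_le_of_one_le hr hμ)
  have hωr : ω ≤ r * ω := le_mul_of_one_le_left hω hr
  rw [Real.sqrt_div' _ hd, div_right_comm]
  gcongr
  linarith

theorem sqrt_mul_sq_le_quarter {r ω q : ℝ} (hr : 1 ≤ r) (hω : 0 ≤ ω) (hsmall : r * ω < 1 / 2)
    (hq0 : 0 ≤ q) (hq : q ≤ √r * ω) : √r * q ^ 2 ≤ 1 / 4 := by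
  have hsq : √r ^ 2 = r := Real.sq_sqrt (by linarith)
  have hsqrt : √r ≤ r := by nlinarith [Real.one_le_sqrt.2 hr]
  calc √r * q ^ 2 ≤ √r * (√r * ω) ^ 2 := by gcongr
    _ = √r * (r * ω ^ 2) := by rw [mul_pow, hsq]
    _ ≤ r * (r * ω ^ 2) := by gcongr
    _ = (r * ω) ^ 2 := by ring
    _ ≤ 1 / 4 := by nlinarith [mul_nonneg (by linarith : (0 : ℝ) ≤ r) hω]

/-- Bounds on the candidate basis V̄: subspace distance to V and entrywise size
(used in the proof of Lemma 5.3 of Fan–Wang–Zhong). -/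
theorem Vbar_distance_and_max_norm_bound
    (d r : ℕ) (hr : 0 < r) (hrd : r ≤ d)
    (v : Fin d → Fin d → ℝ)
    (hon : ∀ i j, ∑ k, v i k * v j k = if i = j then (1 : ℝ) else 0)
    (V : Matrix (Fin d) (Fin r) ℝ)
    (hV : V = Matrix.of fun a k => v (Fin.castLE hrd k) a)
    (Vp : Matrix (Fin d) (Fin (d - r)) ℝ)
    (hVp : Vp = Matrix.of fun (a : Fin d) (k : Fin (d - r)) =>
      v ⟨r + (k : ℕ), by have := k.isLt; omega⟩ a)
    (mu : ℝ) (hmu : mu = matCoherence V)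
    (omega : ℝ) (homega : 0 ≤ omega)
    (Q : Matrix (Fin (d - r)) (Fin r) ℝ)
    (hQbound : matMaxNorm (Vp * Q) ≤ omega / Real.sqrt d)
    (hsmall : (r : ℝ) * omega < 1 / 2)
    (Vbar : Matrix (Fin d) (Fin r) ℝ)
    (hVbar : Vbar = (V + Vp * Q) * matInvSqrt (1 + (Vp * Q)ᵀ * (Vp * Q))) :
    matSpecNorm (Vbar * Vbarᵀ - V * Vᵀ) ≤
        4 * (r : ℝ) ^ ((3 : ℝ) / 2) * Real.sqrt mu * omega ∧
      matMaxNorm Vbar ≤ 2 * Real.sqrt ((r : ℝ) * mu / (d : ℝ)) := by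
  have hr1 : (1 : ℝ) ≤ r := Nat.one_le_cast.2 hr
  have hVV : Vᵀ * V = 1 := hV ▸ transpose_mul_self_of_orthonormal hon (Fin.castLE_injective hrd)
  have hVQ : Vᵀ * (Vp * Q) = 0 := by
    rw [← Matrix.mul_assoc, hV, hVp, transpose_mul_eq_zero_of_orthonormal hon, Matrix.zero_mul]
    intro k l h
    have := congrArg Fin.val h
    simp only [Fin.val_castLE] at this
    omega
  have hμ : 1 ≤ mu := hmu ▸ one_le_matCoherence V hVV hr
  have hQent (i j) : |(Vp * Q) i j| ≤ omega / √d := (abs_le_matMaxNorm _ i j).trans hQbound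
  have hQnorm : ‖Vp * Q‖ ≤ √r * omega := by
    have hd : 0 < √(d : ℝ) := Real.sqrt_pos.2 (by exact_mod_cast hr.trans_le hrd)
    refine (Matrix.l2_opNorm_le_of_forall_abs_le (by positivity) hQent).trans_eq ?_
    simp only [Fintype.card_fin]
    field_simp
  rw [← Matrix.perturbedBasis] at hVbar
  subst hVbar
  refine ⟨?_, Matrix.matMaxNorm_perturbedBasis_le (by positivity) (fun i j => ?_) (fun i j => ?_) ?_⟩
  · calc _ ≤ _ := Matrix.matSpecNorm_le_l2_opNorm _
      _ ≤ 2 * (‖Vp * Q‖ + ‖Vp * Q‖ ^ 2) :=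
        Matrix.l2_opNorm_perturbedBasis_mul_transpose_sub_le hVV hVQ
      _ ≤ _ := two_mul_add_sq_le hr1 hμ homega hsmall (norm_nonneg _) hQnorm
  · exact Real.abs_le_sqrt (hmu ▸ sq_le_mul_matCoherence_div V i j)
  · exact (hQent i j).trans
      (div_sqrt_le_sqrt_mul_div_div_two hr1 hμ homega hsmall (Nat.cast_nonneg d))
  · simpa using sqrt_mul_sq_le_quarter hr1 homega hsmall (norm_nonneg _) hQnorm
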